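/- Let (W,S) be a Coxeter system, let w ∈ W, let u ∈ R(w), and let x ≤ w in the Bruhat order. Then q^w_x = q^w_{xu} (note xu ≤ w, so both sides are defined). -/

import Mathlib

noncomputable section

variable {B : Type*} {W : Type*} [Group W]

/-- The Bruhat order on a Coxeter group: the partial order generated by `u < r * u`
whenever `r` is a reflection and `ℓ(u) < ℓ(r * u)`. -/
def CoxBruhatLE {M : CoxeterMatrix B} (cs : CoxeterSystem M W) (x w : W) : Prop :=
  Relation.ReflTransGen
    (fun a b => ∃ r : W, cs.IsReflection r ∧ b = r * a ∧ cs.length a < cs.length b) x w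

/-- The strict Bruhat order. -/
def CoxBruhatLT {M : CoxeterMatrix B} (cs : CoxeterSystem M W) (x w : W) : Prop :=
  CoxBruhatLE cs x w ∧ x ≠ w

/-- `R(w)`: the subgroup generated by the simple reflections `s` with `w * s < w`. -/
def Rsub {M : CoxeterMatrix B} (cs : CoxeterSystem M W) (w : W) : Subgroup W :=
  Subgroup.closure {s | (∃ i : B, s = cs.simple i) ∧ CoxBruhatLT cs (w * s) w}

/-- `q^w_x = n^w_x − ℓ(w)` where `n^w_x` is the number of reflections `r` with `r x ≤ w`. -/
def coxQ {M : CoxeterMatrix B} (cs : CoxeterSystem M W) (w x : W) : ℤ :=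
  (Set.ncard {r : W | cs.IsReflection r ∧ CoxBruhatLE cs (r * x) w} : ℤ)
    - (cs.length w : ℤ)

/-!
If `s` is a right descent of `w`, then `v ≤ w ↔ v s ≤ w`; as `R(w)` is generated by such `s`, the
same holds for every `u ∈ R(w)`, so the reflections `r` with `r x ≤ w` are exactly those with
`r x u ≤ w`, and `q^w_x = q^w_{xu}`.

The descent property is proved by walking down a Bruhat chain from `w`. The only non-trivial step
is the lifting property: a right inversion `t ≠ s` of `c` yields the right inversion `s t s` of
`c s`. This comes from the parity cocycle `n(w, t) ∈ ZMod 2` of the action of `W` on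
`W × ZMod 2` in which `s` sends `(t, ε)` to `(s t s, ε + [t = s])`: `n(w, t) = 1` exactly when `t`
is a right inversion of `w`, and `n(c, t) = n(s, t) + n(c s, s t s)`.
-/

namespace CoxeterSystem

theorem prod_map_alternatingWord_two_mul {G : Type*} [Monoid G] (f : B → G) (i j : B) (m : ℕ) :
    ((alternatingWord i j (2 * m)).map f).prod = (f i * f j) ^ m := by
  induction m with
  | zero => simp [alternatingWord]
  | succ m ih =>
    rw [show 2 * (m + 1) = 2 * m + 1 + 1 by ring, alternatingWord_succ', alternatingWord_succ']
    simp [ih, pow_succ', mul_assoc]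

variable {M : CoxeterMatrix B} (cs : CoxeterSystem M W)

theorem wordProd_alternatingWord_two_mul_self (i j : B) :
    cs.wordProd (alternatingWord i j (2 * M i j)) = 1 := by
  simp [prod_alternatingWord_eq_mul_pow, simple_mul_simple_pow]

section

variable [DecidableEq W]

theorem even_count_leftInvSeq_alternatingWord_two_mul_self (i j : B) (t : W) :
    Even ((cs.leftInvSeq (alternatingWord i j (2 * M i j))).count t) := by
  set l := cs.leftInvSeq (alternatingWord i j (2 * M i j))
  -- The `k`-th entry of `l` is `s i * (s j * s i) ^ k`, which has period `M i j` in `k`.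
  have hdrop : l.drop (M i j) = l.take (M i j) := by
    apply List.ext_getElem
    · simp only [l, List.length_drop, List.length_take, length_leftInvSeq, length_alternatingWord]
      omega
    · intro k h₁ h₂
      simp only [l, List.getElem_drop, List.getElem_take]
      rw [getElem_leftInvSeq_alternatingWord, getElem_leftInvSeq_alternatingWord,
        prod_alternatingWord_eq_mul_pow, prod_alternatingWord_eq_mul_pow]
      · simp [show (2 * (M i j + k) + 1) / 2 = M i j + k by omega,
          show (2 * k + 1) / 2 = k by omega, pow_add]
      · simp only [l, List.length_drop, length_leftInvSeq, length_alternatingWord] at h₁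
        omega
      · simp only [l, List.length_take, length_leftInvSeq, length_alternatingWord] at h₂
        omega
  rw [← List.take_append_drop (M i j) l, List.count_append, hdrop]
  exact ⟨_, rfl⟩

-- The classical action of `s i` on (reflection, sign) pairs, with the first component ranging
-- over all of `W` to avoid a subtype.
def reflAct (i : B) : Function.End (W × ZMod 2) :=
  fun p => (MulAut.conj (cs.simple i) p.1, p.2 + if p.1 = cs.simple i then 1 else 0)

theorem prod_map_reflAct_apply (ω : List B) (t : W) (ε : ZMod 2) :
    (ω.map cs.reflAct).prod (t, ε) = (MulAut.conj (cs.wordProd ω) t,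
      ε + (cs.leftInvSeq ω).count (MulAut.conj (cs.wordProd ω) t)) := by
  induction ω with
  | nil =>
    simp only [List.map_nil, List.prod_nil, wordProd_nil, map_one, MulAut.one_apply,
      leftInvSeq_nil, List.count_nil, Nat.cast_zero, add_zero]
    rfl
  | cons i ω ih =>
    have hconj : ∀ x : W, cs.simple i = MulAut.conj (cs.simple i) x ↔ x = cs.simple i := by
      intro x
      conv_lhs => rw [← (MulAut.conj (cs.simple i)).injective.eq_iff]
      simp [mul_assoc, eq_comm]
    rw [List.map_cons, List.prod_cons]
    change cs.reflAct i ((ω.map cs.reflAct).prod (t, ε)) = _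
    rw [ih]
    simp only [reflAct, wordProd_cons, map_mul, MulAut.mul_apply, leftInvSeq, List.count_cons,
      List.count_map_of_injective _ _ (MulAut.conj (cs.simple i)).injective, beq_iff_eq, hconj]
    push_cast
    rw [add_assoc]

theorem isLiftable_reflAct : M.IsLiftable cs.reflAct := by
  intro i j
  rw [← prod_map_alternatingWord_two_mul]
  funext ⟨t, ε⟩
  rw [prod_map_reflAct_apply, wordProd_alternatingWord_two_mul_self, map_one, MulAut.one_apply,
    ZMod.natCast_eq_zero_iff_even.mpr (cs.even_count_leftInvSeq_alternatingWord_two_mul_self ..),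
    add_zero]
  rfl

def reflRep : W →* Function.End (W × ZMod 2) := cs.lift ⟨cs.reflAct, cs.isLiftable_reflAct⟩

theorem reflRep_simple (i : B) : cs.reflRep (cs.simple i) = cs.reflAct i :=
  cs.lift_apply_simple cs.isLiftable_reflAct i

theorem reflRep_wordProd (ω : List B) : cs.reflRep (cs.wordProd ω) = (ω.map cs.reflAct).prod := by
  rw [wordProd, map_list_prod, List.map_map]
  congr 1
  exact List.map_congr_left fun i _ => cs.reflRep_simple i

def invParity (w t : W) : ZMod 2 := (cs.reflRep w (t, 0)).2

theorem invParity_wordProd (ω : List B) (t : W) :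
    cs.invParity (cs.wordProd ω) t =
      (cs.leftInvSeq ω).count (MulAut.conj (cs.wordProd ω) t) := by
  simp [invParity, reflRep_wordProd, prod_map_reflAct_apply]

theorem reflRep_apply (w t : W) (ε : ZMod 2) :
    cs.reflRep w (t, ε) = (MulAut.conj w t, ε + cs.invParity w t) := by
  obtain ⟨ω, rfl⟩ := cs.wordProd_surjective w
  rw [invParity_wordProd, reflRep_wordProd, prod_map_reflAct_apply]

theorem invParity_mul (x y t : W) :
    cs.invParity (x * y) t = cs.invParity y t + cs.invParity x (MulAut.conj y t) := by
  have h : cs.reflRep (x * y) (t, 0) = cs.reflRep x (cs.reflRep y (t, 0)) := by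
    rw [map_mul]; rfl
  rw [reflRep_apply, reflRep_apply, reflRep_apply] at h
  simpa using (congrArg Prod.snd h)

theorem invParity_one (t : W) : cs.invParity 1 t = 0 := by
  rw [invParity, map_one]; rfl

theorem invParity_simple (i : B) (t : W) :
    cs.invParity (cs.simple i) t = if t = cs.simple i then 1 else 0 := by
  simp [invParity, reflRep_simple, reflAct]

theorem invParity_self {t : W} (ht : cs.IsReflection t) : cs.invParity t t = 1 := by
  obtain ⟨u, i, rfl⟩ := ht
  -- Expand along `t = (u s) u⁻¹`, `u s` and `1 = u u⁻¹`; only `n(s, s) = 1` survives.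
  have hconj : MulAut.conj u⁻¹ (u * cs.simple i * u⁻¹) = cs.simple i := by simp [mul_assoc]
  have h₁ := cs.invParity_mul (u * cs.simple i) u⁻¹ (u * cs.simple i * u⁻¹)
  have h₂ := cs.invParity_mul u u⁻¹ (u * cs.simple i * u⁻¹)
  have h₃ := cs.invParity_mul u (cs.simple i) (cs.simple i)
  rw [hconj] at h₁ h₂
  simp only [mul_inv_cancel, invParity_one, invParity_simple, if_pos, MulAut.conj_apply,
    inv_simple, simple_mul_simple_self, one_mul] at h₁ h₂ h₃
  linear_combination h₁ + h₃ - h₂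

theorem invParity_mul_self {t : W} (ht : cs.IsReflection t) (w : W) :
    cs.invParity (w * t) t = cs.invParity w t + 1 := by
  rw [invParity_mul, invParity_self cs ht, MulAut.conj_apply, ht.inv, ht.mul_self, one_mul,
    add_comm]

theorem isRightInversion_of_invParity_eq_one {w t : W} (h : cs.invParity w t = 1) :
    cs.IsRightInversion w t := by
  obtain ⟨ω, hω, rfl⟩ := cs.exists_isReduced w
  rw [invParity_wordProd] at h
  have hmem : MulAut.conj (cs.wordProd ω) t ∈ cs.leftInvSeq ω :=
    List.count_pos_iff.mp (Nat.pos_of_ne_zero fun h0 => by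
      rw [h0, Nat.cast_zero] at h; exact zero_ne_one h)
  obtain ⟨hrefl, hlt⟩ := cs.isLeftInversion_of_mem_leftInvSeq hω hmem
  refine ⟨(cs.isReflection_conj_iff _ t).mp hrefl, ?_⟩
  simpa using hlt

theorem isRightInversion_iff_invParity_eq_one {w t : W} :
    cs.IsRightInversion w t ↔ cs.invParity w t = 1 := by
  refine ⟨fun ⟨ht, hlt⟩ => ?_, cs.isRightInversion_of_invParity_eq_one⟩
  by_contra hne
  have h0 : cs.invParity w t = 0 := (by decide : ∀ a : ZMod 2, a ≠ 1 → a = 0) _ hne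
  have hwt := (cs.isRightInversion_of_invParity_eq_one
    (by rw [invParity_mul_self cs ht, h0, zero_add])).2
  rw [mul_assoc, ht.mul_self, mul_one] at hwt
  omega

end

theorem IsRightInversion.mul_simple {w t : W} {i : B} (h : cs.IsRightInversion w t)
    (hne : t ≠ cs.simple i) :
    cs.IsRightInversion (w * cs.simple i) (cs.simple i * t * cs.simple i) := by
  classical
  have hsplit := cs.invParity_mul (w * cs.simple i) (cs.simple i) t
  rw [mul_assoc, simple_mul_simple_self, mul_one, invParity_simple, if_neg hne, zero_add,
    MulAut.conj_apply, inv_simple] at hsplit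
  rw [isRightInversion_iff_invParity_eq_one] at h ⊢
  rw [← hsplit, h]

end CoxeterSystem

section Bruhat

variable {M : CoxeterMatrix B} (cs : CoxeterSystem M W)

theorem coxBruhatLE_mul_of_length_lt {a r : W} (hr : cs.IsReflection r)
    (h : cs.length a < cs.length (r * a)) : CoxBruhatLE cs a (r * a) :=
  .single ⟨r, hr, rfl, h⟩

theorem CoxBruhatLE.eq_or_length_lt {x w : W} (h : CoxBruhatLE cs x w) :
    x = w ∨ cs.length x < cs.length w := by
  induction h with
  | refl => exact .inl rfl
  | tail _ hstep ih =>
    obtain ⟨r, -, -, hlt⟩ := hstep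
    exact .inr (ih.elim (· ▸ hlt) (·.trans hlt))

theorem CoxBruhatLT.length_lt {x w : W} (h : CoxBruhatLT cs x w) :
    cs.length x < cs.length w :=
  (h.1.eq_or_length_lt cs).resolve_left h.2

theorem CoxBruhatLE.mul_simple_of_isRightDescent {v w : W} {i : B} (hw : cs.IsRightDescent w i)
    (hv : CoxBruhatLE cs v w) : CoxBruhatLE cs (v * cs.simple i) w := by
  induction hv using Relation.ReflTransGen.head_induction_on with
  | refl =>
    have hw' : w * cs.simple i * w⁻¹ * (w * cs.simple i) = w := by simp [mul_assoc]
    have h := coxBruhatLE_mul_of_length_lt cs (a := w * cs.simple i)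
      ((cs.isReflection_simple i).conj w) (by rw [hw']; exact hw)
    rwa [hw'] at h
  | @head v c hstep hc ih =>
    obtain ⟨r, hr, rfl, hlt⟩ := hstep
    have hcs : r * v * cs.simple i = r * (v * cs.simple i) := mul_assoc _ _ _
    rcases (hr.length_mul_right_ne (v * cs.simple i)).lt_or_gt with hdown | hup
    -- `v = c t` for the right inversion `t = v⁻¹ r v` of `c = r v`; if `t ≠ s`, then `s t s` is
    -- a right inversion of `c s = r (v s)`, which makes `v s` shorter than `c s`.
    · have hrr : ∀ x, r * (r * x) = x := fun x => by rw [← mul_assoc, hr.mul_self, one_mul]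
      have hinv : cs.IsRightInversion (r * v) (v⁻¹ * r * v) :=
        ⟨by simpa using hr.conj v⁻¹, by simpa only [mul_assoc, mul_inv_cancel_left, hrr]⟩
      by_cases ht : v⁻¹ * r * v = cs.simple i
      · rwa [← ht, mul_assoc, mul_inv_cancel_left]
      · have hlt' := (hinv.mul_simple cs ht).2
        simp only [mul_assoc, cs.simple_mul_simple_cancel_left, mul_inv_cancel_left, hrr] at hlt'
        exact absurd hdown (not_lt.mpr hlt'.le)
    · exact (coxBruhatLE_mul_of_length_lt cs hr hup).trans (hcs ▸ ih)

theorem coxBruhatLE_mul_simple_iff {v w : W} {i : B} (hw : cs.IsRightDescent w i) :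
    CoxBruhatLE cs (v * cs.simple i) w ↔ CoxBruhatLE cs v w := by
  refine ⟨fun h => ?_, CoxBruhatLE.mul_simple_of_isRightDescent cs hw⟩
  simpa [mul_assoc] using h.mul_simple_of_isRightDescent cs hw

theorem coxBruhatLE_mul_iff_of_mem_Rsub {u w : W} (hu : u ∈ Rsub cs w) (v : W) :
    CoxBruhatLE cs (v * u) w ↔ CoxBruhatLE cs v w := by
  induction hu using Subgroup.closure_induction generalizing v with
  | mem _ hs =>
    obtain ⟨⟨i, rfl⟩, hlt⟩ := hs
    exact coxBruhatLE_mul_simple_iff cs hlt.length_lt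
  | one => rw [mul_one]
  | mul g g' _ _ hg hg' => rw [← mul_assoc, hg', hg]
  | inv g _ hg => rw [← hg, inv_mul_cancel_right]

end Bruhat

theorem q_eq_of_mul_right_descent_general
    {B : Type*} {W : Type*} [Group W] {M : CoxeterMatrix B} (cs : CoxeterSystem M W)
    (w u : W) (hu : u ∈ Rsub cs w) (x : W) :
    coxQ cs w x = coxQ cs w (x * u) := by
  simp only [coxQ, ← mul_assoc, coxBruhatLE_mul_iff_of_mem_Rsub cs hu]

/-- **Proposition (Simple Move).** Let `(W,S)` be a Coxeter system, `w ∈ W`, `u ∈ R(w)` and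
`x ≤ w` in the Bruhat order. Then `q^w_x = q^w_{x u}`. -/
theorem q_eq_of_mul_right_descent
    {B : Type*} {W : Type*} [Group W] {M : CoxeterMatrix B} (cs : CoxeterSystem M W)
    (w u : W) (hu : u ∈ Rsub cs w) (x : W) (hx : CoxBruhatLE cs x w) :
    coxQ cs w x = coxQ cs w (x * u) :=
  q_eq_of_mul_right_descent_general cs w u hu x
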